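/- arXiv:2407.21203 — 3 statements merged into one kernel-verified Lean document; each statement's English description precedes it below -/
import Mathlib

section
/- Let G be a subgroup of the n-qubit Pauli group stabilizing a pure stabilizer state φ, and let [n]=A∪B∪C be a tripartition with |A|=1. After measuring all qubits in B in the computational basis, the post-measurement reduced state on qubit A is pure (for every measurement outcome) if and only if G contains an element of the form ±P_A ⊗ Z(r)_B ⊗ I_C where P ∈ {X,Y,Z} and Z(r)_B is a tensor product of I and Z operators on B. -/
open scoped Classical
open Finset

/-- The (x,y) entry of the single-qubit Pauli matrix indexed by p ∈ Fin 4
(0 = I, 1 = X, 2 = Y, 3 = Z), with basis indexed by Bool. -/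
noncomputable def pauliEntry (p : Fin 4) (x y : Bool) : ℂ :=
  if p = 0 then (if x = y then 1 else 0)
  else if p = 1 then (if x = y then 0 else 1)
  else if p = 2 then (if x = y then 0 else if x then Complex.I else -Complex.I)
  else (if x = y then (if x then -1 else 1) else 0)

def mul4 : Fin 4 → Fin 4 → Fin 4 :=
  ![![0,1,2,3],![1,0,3,2],![2,3,0,1],![3,2,1,0]]

noncomputable def ph4 (p q : Fin 4) : ℂ :=
  if p = 0 ∨ q = 0 ∨ p = q then 1
  else if (p,q) = (1,2) ∨ (p,q) = (2,3) ∨ (p,q) = (3,1) then Complex.I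
  else -Complex.I

lemma pe_conj (p : Fin 4) (x y : Bool) :
    (starRingEnd ℂ) (pauliEntry p x y) = pauliEntry p y x := by
  fin_cases p <;> fin_cases x <;> fin_cases y <;>
    simp [pauliEntry]

lemma pe_mul (p q : Fin 4) (x y : Bool) :
    ∑ b : Bool, pauliEntry p x b * pauliEntry q b y
      = ph4 p q * pauliEntry (mul4 p q) x y := by
  fin_cases p <;> fin_cases q <;> fin_cases x <;> fin_cases y <;>
    simp [pauliEntry, mul4, ph4, Fintype.sum_bool, Complex.I_mul_I] <;> ring_nf <;>
    simp [Complex.I_sq]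

lemma pe_diag_sum (p : Fin 4) :
    ∑ b : Bool, pauliEntry p b b = if p = 0 then 2 else 0 := by
  fin_cases p <;> simp [pauliEntry, Fintype.sum_bool] <;> norm_num

lemma ph4_self (p : Fin 4) : ph4 p p = 1 := by simp [ph4]

lemma mul4_self (p : Fin 4) : mul4 p p = 0 := by fin_cases p <;> decide

lemma mul4_left_cancel (p q : Fin 4) : mul4 p (mul4 p q) = q := by
  fin_cases p <;> fin_cases q <;> decide


/-- The n-qubit Pauli string matrix ⊗_j P_{p j}. -/
noncomputable def pauliMat (n : ℕ) (p : Fin n → Fin 4) :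
    Matrix (Fin n → Bool) (Fin n → Bool) ℂ :=
  Matrix.of fun x y => ∏ j : Fin n, pauliEntry (p j) (x j) (y j)

lemma pauliMat_mul (n : ℕ) (p q : Fin n → Fin 4) :
    pauliMat n p * pauliMat n q
      = (∏ j, ph4 (p j) (q j)) • pauliMat n (fun j => mul4 (p j) (q j)) := by
  ext x y
  simp only [Matrix.mul_apply, pauliMat, Matrix.of_apply, Matrix.smul_apply, smul_eq_mul]
  have h1 : ∀ g : Fin n → Bool,
      (∏ j, pauliEntry (p j) (x j) (g j)) * ∏ j, pauliEntry (q j) (g j) (y j)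
      = ∏ j, (pauliEntry (p j) (x j) (g j) * pauliEntry (q j) (g j) (y j)) := fun g =>
    (Finset.prod_mul_distrib).symm
  simp_rw [h1]
  rw [← Fintype.prod_sum (fun j (b : Bool) => pauliEntry (p j) (x j) b * pauliEntry (q j) b (y j))]
  rw [← Finset.prod_mul_distrib]
  exact Finset.prod_congr rfl fun j _ => pe_mul _ _ _ _

lemma pauliMat_zero (n : ℕ) : pauliMat n (fun _ => 0) = 1 := by
  ext x y
  simp only [pauliMat, Matrix.of_apply, pauliEntry, if_pos rfl, Matrix.one_apply]
  by_cases h : x = y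
  · subst h; simp
  · rw [if_neg h]
    obtain ⟨j, hj⟩ := Function.ne_iff.mp h
    exact Finset.prod_eq_zero (Finset.mem_univ j) (by simp [hj])

lemma pauliMat_trace (n : ℕ) (p : Fin n → Fin 4) :
    (pauliMat n p).trace = if p = (fun _ => 0) then (2:ℂ)^n else 0 := by
  simp only [Matrix.trace, Matrix.diag, pauliMat, Matrix.of_apply]
  rw [← Fintype.prod_sum (fun j (b : Bool) => pauliEntry (p j) b b)]
  by_cases h : p = fun _ => 0
  · subst h
    rw [if_pos rfl]
    have : ∀ j : Fin n, ∑ b : Bool, pauliEntry 0 b b = 2 := fun j => pe_diag_sum 0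
    simp only [pe_diag_sum, if_pos rfl]
    simp
  · rw [if_neg h]
    obtain ⟨j, hj⟩ := Function.ne_iff.mp h
    exact Finset.prod_eq_zero (Finset.mem_univ j) (by rw [pe_diag_sum, if_neg hj])

lemma pauliMat_herm (n : ℕ) (p : Fin n → Fin 4) : (pauliMat n p).conjTranspose = pauliMat n p := by
  ext x y
  simp only [Matrix.conjTranspose_apply, pauliMat, Matrix.of_apply]
  rw [show (star (∏ j : Fin n, pauliEntry (p j) (y j) (x j)))
      = (starRingEnd ℂ) (∏ j : Fin n, pauliEntry (p j) (y j) (x j)) from rfl, map_prod]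
  exact Finset.prod_congr rfl fun j _ => pe_conj _ _ _

def stabSet (n : ℕ) (φ : (Fin n → Bool) → ℂ) : Set (Fin n → Fin 4) :=
  {p | ∃ ε ∈ ({1, -1} : Set ℂ), ((ε • pauliMat n p).mulVec φ = φ)}

lemma pauliMat_mulVec_mulVec (n : ℕ) (p : Fin n → Fin 4) (φ : (Fin n → Bool) → ℂ) :
    (pauliMat n p).mulVec ((pauliMat n p).mulVec φ) = φ := by
  rw [Matrix.mulVec_mulVec, pauliMat_mul]
  simp [ph4_self, mul4_self, pauliMat_zero]

lemma smul_vec_cancel {α : Type*} [Fintype α] {v : α → ℂ} (hv : v ≠ 0) {a b : ℂ}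
    (h : a • v = b • v) : a = b := by
  by_contra hne
  apply hv
  have h0 : (a - b) • v = 0 := by rw [sub_smul, h, sub_self]
  rcases smul_eq_zero.mp h0 with h1 | h1
  · exact absurd (sub_eq_zero.mp (by exact_mod_cast h1)) hne
  · exact h1

lemma sgn_unique {n : ℕ} {φ : (Fin n → Bool) → ℂ} (hφ : φ ≠ 0) {p : Fin n → Fin 4}
    {ε ε' : ℂ} (h : (ε • pauliMat n p).mulVec φ = φ) (h' : (ε' • pauliMat n p).mulVec φ = φ) :
    ε = ε' := by
  have hv : (pauliMat n p).mulVec φ ≠ 0 := by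
    intro hv
    apply hφ
    rw [← pauliMat_mulVec_mulVec n p φ, hv, Matrix.mulVec_zero]
  refine smul_vec_cancel hv ?_
  rw [← Matrix.smul_mulVec, ← Matrix.smul_mulVec, h, h']

lemma sq_one_of_stab {n : ℕ} {φ : (Fin n → Bool) → ℂ} (hφ : φ ≠ 0) {p : Fin n → Fin 4}
    {δ : ℂ} (h : (δ • pauliMat n p).mulVec φ = φ) : δ = 1 ∨ δ = -1 := by
  have h2 : (δ • pauliMat n p).mulVec ((δ • pauliMat n p).mulVec φ) = φ := by rw [h, h]
  rw [Matrix.smul_mulVec, Matrix.smul_mulVec, Matrix.mulVec_smul,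
    pauliMat_mulVec_mulVec, smul_smul] at h2
  have hδ2 : δ * δ = 1 := by
    have := smul_vec_cancel hφ (v := φ) (a := δ * δ) (b := 1) (by rw [h2, one_smul])
    exact this
  have hz : (δ - 1) * (δ + 1) = 0 := by ring_nf; linear_combination hδ2
  rcases mul_eq_zero.mp hz with h1 | h1
  · left; linear_combination h1
  · right; linear_combination h1

noncomputable def sgn (n : ℕ) (φ : (Fin n → Bool) → ℂ) (p : Fin n → Fin 4) : ℂ :=
  if h : ∃ ε, (ε • pauliMat n p).mulVec φ = φ then h.choose else 1

lemma sgn_spec {n : ℕ} {φ : (Fin n → Bool) → ℂ} {p : Fin n → Fin 4}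
    (hp : p ∈ stabSet n φ) : ((sgn n φ p) • pauliMat n p).mulVec φ = φ := by
  obtain ⟨ε, -, hε⟩ := hp
  rw [sgn, dif_pos ⟨ε, hε⟩]
  exact (⟨ε, hε⟩ : ∃ ε, (ε • pauliMat n p).mulVec φ = φ).choose_spec

lemma sgn_mem {n : ℕ} {φ : (Fin n → Bool) → ℂ} (hφ : φ ≠ 0) {p : Fin n → Fin 4}
    (hp : p ∈ stabSet n φ) : sgn n φ p = 1 ∨ sgn n φ p = -1 :=
  sq_one_of_stab hφ (sgn_spec hp)

lemma sgn_mul {n : ℕ} {φ : (Fin n → Bool) → ℂ} (hφ : φ ≠ 0) {p q : Fin n → Fin 4}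
    (hp : p ∈ stabSet n φ) (hq : q ∈ stabSet n φ) :
    (fun j => mul4 (p j) (q j)) ∈ stabSet n φ ∧
    (sgn n φ p • pauliMat n p) * (sgn n φ q • pauliMat n q)
      = sgn n φ (fun j => mul4 (p j) (q j)) • pauliMat n (fun j => mul4 (p j) (q j)) := by
  set r : Fin n → Fin 4 := fun j => mul4 (p j) (q j) with hr
  set δ : ℂ := sgn n φ p * (sgn n φ q * ∏ j, ph4 (p j) (q j)) with hδ
  have hmul : (sgn n φ p • pauliMat n p) * (sgn n φ q • pauliMat n q) = δ • pauliMat n r := by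
    rw [Matrix.smul_mul, Matrix.mul_smul, pauliMat_mul, smul_smul, smul_smul, hδ, mul_assoc]
  have hstab : (δ • pauliMat n r).mulVec φ = φ := by
    rw [← hmul, ← Matrix.mulVec_mulVec, sgn_spec hq, sgn_spec hp]
  have hδ1 : δ = 1 ∨ δ = -1 := sq_one_of_stab hφ hstab
  have hrS : r ∈ stabSet n φ := ⟨δ, by simpa [Set.mem_insert_iff] using hδ1, hstab⟩
  refine ⟨hrS, ?_⟩
  rw [hmul, sgn_unique hφ hstab (sgn_spec hrS)]

lemma zero_mem_stab {n : ℕ} {φ : (Fin n → Bool) → ℂ} : (fun _ => (0:Fin 4)) ∈ stabSet n φ := by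
  refine ⟨1, by simp, ?_⟩
  rw [pauliMat_zero, one_smul]
  simp [Matrix.mulVec_one]

lemma sgn_zero {n : ℕ} {φ : (Fin n → Bool) → ℂ} (hφ : φ ≠ 0) :
    sgn n φ (fun _ => (0:Fin 4)) = 1 := by
  refine sgn_unique hφ (sgn_spec zero_mem_stab) ?_
  rw [pauliMat_zero, one_smul]
  simp

lemma my_sum_mulVec {ι m : Type*} [Fintype m] (t : Finset ι)
    (A : ι → Matrix m m ℂ) (v : m → ℂ) :
    (∑ i ∈ t, A i).mulVec v = ∑ i ∈ t, (A i).mulVec v := by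
  ext x
  simp only [Matrix.mulVec, dotProduct, Finset.sum_apply, Matrix.sum_apply,
    Finset.sum_mul]
  exact Finset.sum_comm

lemma inv_two_pow_smul {X : Type*} [AddCommMonoid X] [Module ℂ X] (n : ℕ) (w : X) :
    ((2:ℂ)^n)⁻¹ • ((2^n : ℕ) • w) = w := by
  rw [← Nat.cast_smul_eq_nsmul ℂ, smul_smul, Nat.cast_pow, Nat.cast_ofNat,
    inv_mul_cancel₀ (pow_ne_zero _ two_ne_zero), one_smul]

lemma grand_formula {n : ℕ} {φ : (Fin n → Bool) → ℂ} (hφ : φ ≠ 0)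
    (hcard : ((Set.toFinite (stabSet n φ)).toFinset).card = 2 ^ n) (f g : Fin n → Bool) :
    φ f * (starRingEnd ℂ) (φ g)
      = (∑ h, φ h * (starRingEnd ℂ) (φ h)) * ((2:ℂ)^n)⁻¹
          * ∑ p ∈ (Set.toFinite (stabSet n φ)).toFinset, sgn n φ p * pauliMat n p f g := by
  classical
  set Sf := (Set.toFinite (stabSet n φ)).toFinset with hSf
  have hmem : ∀ p, p ∈ Sf ↔ p ∈ stabSet n φ := fun p => Set.Finite.mem_toFinset _
  set s : ℂ := ∑ h, φ h * (starRingEnd ℂ) (φ h) with hs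
  have hsreal : (starRingEnd ℂ) s = s := by
    rw [hs, map_sum]
    exact Finset.sum_congr rfl fun h _ => by rw [map_mul, Complex.conj_conj]; ring
  have hsne : s ≠ 0 := by
    intro h0
    apply hφ
    funext x
    have hnn : ∀ h : Fin n → Bool, 0 ≤ Complex.normSq (φ h) := fun h => Complex.normSq_nonneg _
    have hcast : s = ((∑ h, Complex.normSq (φ h) : ℝ) : ℂ) := by
      rw [hs]
      push_cast
      exact Finset.sum_congr rfl fun h _ => (Complex.mul_conj (φ h))
    rw [hcast] at h0
    have : (∑ h, Complex.normSq (φ h) : ℝ) = 0 := by exact_mod_cast h0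
    have := (Finset.sum_eq_zero_iff_of_nonneg (fun h _ => hnn h)).mp this x (Finset.mem_univ x)
    exact Complex.normSq_eq_zero.mp this
  have h2n : ((2:ℂ)^n) ≠ 0 := pow_ne_zero _ two_ne_zero
  set Q : Matrix (Fin n → Bool) (Fin n → Bool) ℂ :=
    ((2:ℂ)^n)⁻¹ • ∑ p ∈ Sf, sgn n φ p • pauliMat n p with hQ
  -- Q fixes φ
  have hQφ : Q.mulVec φ = φ := by
    rw [hQ, Matrix.smul_mulVec, my_sum_mulVec]
    have : ∀ p ∈ Sf, (sgn n φ p • pauliMat n p).mulVec φ = φ := fun p hp =>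
      sgn_spec ((hmem p).mp hp)
    rw [Finset.sum_congr rfl this, Finset.sum_const, hcard]
    exact inv_two_pow_smul n φ
  -- absorption
  have habs : ∀ p ∈ Sf, (sgn n φ p • pauliMat n p) * Q = Q := by
    intro p hp
    rw [hQ, Matrix.mul_smul, Finset.mul_sum]
    congr 1
    refine Finset.sum_nbij' (fun q => fun j => mul4 (p j) (q j))
      (fun q => fun j => mul4 (p j) (q j)) ?_ ?_ ?_ ?_ ?_
    · intro q hq
      exact (hmem _).mpr (sgn_mul hφ ((hmem p).mp hp) ((hmem q).mp hq)).1
    · intro q hq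
      exact (hmem _).mpr (sgn_mul hφ ((hmem p).mp hp) ((hmem q).mp hq)).1
    · intro q _; funext j; exact mul4_left_cancel _ _
    · intro q _; funext j; exact mul4_left_cancel _ _
    · intro q hq
      exact (sgn_mul hφ ((hmem p).mp hp) ((hmem q).mp hq)).2
  -- idempotent
  have hQ2 : Q * Q = Q := by
    conv_lhs => rw [hQ]
    rw [Matrix.smul_mul, Matrix.sum_mul]
    rw [Finset.sum_congr rfl habs, Finset.sum_const, hcard]
    exact inv_two_pow_smul n Q
  -- hermitian
  have hQH : Q.conjTranspose = Q := by
    rw [hQ, Matrix.conjTranspose_smul, Matrix.conjTranspose_sum]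
    congr 1
    · simp
    · refine Finset.sum_congr rfl fun p hp => ?_
      rw [Matrix.conjTranspose_smul, pauliMat_herm]
      congr 1
      rcases sgn_mem hφ ((hmem p).mp hp) with h | h <;> rw [h] <;> simp
  -- trace 1
  have hQtr : Q.trace = 1 := by
    rw [hQ, Matrix.trace_smul, Matrix.trace_sum]
    have : ∀ p ∈ Sf, (sgn n φ p • pauliMat n p).trace
        = if p = (fun _ => 0) then sgn n φ p * 2^n else 0 := by
      intro p _
      rw [Matrix.trace_smul, pauliMat_trace, smul_eq_mul]
      split_ifs <;> simp
    rw [Finset.sum_congr rfl this, Finset.sum_ite_eq' Sf (fun _ => (0:Fin 4))]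
    rw [if_pos ((hmem _).mpr zero_mem_stab), sgn_zero hφ, one_mul, smul_eq_mul,
      inv_mul_cancel₀ h2n]
  -- the rank-one matrix K
  set K : Matrix (Fin n → Bool) (Fin n → Bool) ℂ :=
    Matrix.of (fun f g => φ f * (starRingEnd ℂ) (φ g) / s) with hK
  have hKH : K.conjTranspose = K := by
    ext x y
    simp only [Matrix.conjTranspose_apply, hK, Matrix.of_apply]
    rw [show (star (φ y * (starRingEnd ℂ) (φ x) / s) : ℂ)
        = (starRingEnd ℂ) (φ y * (starRingEnd ℂ) (φ x) / s) from rfl]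
    rw [map_div₀, map_mul, Complex.conj_conj, hsreal]
    ring
  have hQK : Q * K = K := by
    ext x y
    simp only [Matrix.mul_apply, hK, Matrix.of_apply]
    have : ∀ h, Q x h * (φ h * (starRingEnd ℂ) (φ y) / s)
        = (Q x h * φ h) * ((starRingEnd ℂ) (φ y) / s) := fun h => by ring
    rw [Finset.sum_congr rfl (fun h _ => this h), ← Finset.sum_mul]
    have : ∑ h, Q x h * φ h = φ x := congrFun hQφ x
    rw [this]
    ring
  have hKQ : K * Q = K := by
    have := congrArg Matrix.conjTranspose hQK
    rwa [Matrix.conjTranspose_mul, hQH, hKH] at this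
  have hKK : K * K = K := by
    ext x y
    simp only [Matrix.mul_apply, hK, Matrix.of_apply]
    have : ∀ h, φ x * (starRingEnd ℂ) (φ h) / s * (φ h * (starRingEnd ℂ) (φ y) / s)
        = (φ h * (starRingEnd ℂ) (φ h)) * (φ x * (starRingEnd ℂ) (φ y) / (s*s)) := fun h => by
      field_simp
    rw [Finset.sum_congr rfl (fun h _ => this h), ← Finset.sum_mul, ← hs]
    field_simp
  have hKtr : K.trace = 1 := by
    rw [Matrix.trace]
    simp only [Matrix.diag, hK, Matrix.of_apply]
    rw [← Finset.sum_div, ← hs, div_self hsne]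
  -- R := Q - K is hermitian idempotent with trace 0, hence 0
  set R := Q - K with hR
  have hRH : R.conjTranspose = R := by rw [hR, Matrix.conjTranspose_sub, hQH, hKH]
  have hR2 : R * R = R := by
    rw [hR, Matrix.sub_mul, Matrix.mul_sub, Matrix.mul_sub, hQ2, hQK, hKQ, hKK]
    abel
  have hRtr : R.trace = 0 := by rw [hR, Matrix.trace_sub, hQtr, hKtr, sub_self]
  have hRzero : R = 0 := by
    have htr2 : (R * R).trace = 0 := by rw [hR2, hRtr]
    have hexp : (R * R).trace = ∑ x, ∑ y, R x y * (starRingEnd ℂ) (R x y) := by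
      rw [Matrix.trace]
      simp only [Matrix.diag, Matrix.mul_apply]
      refine Finset.sum_congr rfl fun x _ => Finset.sum_congr rfl fun y _ => ?_
      congr 1
      have h3 : star (R y x) = R x y := by
        have := congrFun (congrFun hRH x) y
        simpa [Matrix.conjTranspose_apply] using this
      calc R y x = star (star (R y x)) := (star_star _).symm
        _ = (starRingEnd ℂ) (R x y) := by rw [h3]; rfl
    rw [hexp] at htr2
    have hcast : (∑ x, ∑ y, R x y * (starRingEnd ℂ) (R x y))
        = ((∑ x, ∑ y, Complex.normSq (R x y) : ℝ) : ℂ) := by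
      push_cast
      exact Finset.sum_congr rfl fun x _ => Finset.sum_congr rfl fun y _ =>
        (Complex.mul_conj (R x y))
    rw [hcast] at htr2
    have hreal : (∑ x, ∑ y, Complex.normSq (R x y) : ℝ) = 0 := by exact_mod_cast htr2
    ext x y
    have h1 := (Finset.sum_eq_zero_iff_of_nonneg (fun x _ =>
      Finset.sum_nonneg (fun y _ => Complex.normSq_nonneg _))).mp hreal x (Finset.mem_univ x)
    have h2 := (Finset.sum_eq_zero_iff_of_nonneg (fun y _ =>
      Complex.normSq_nonneg _)).mp h1 y (Finset.mem_univ y)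
    simpa using Complex.normSq_eq_zero.mp h2
  have hQeqK : Q = K := by
    have := sub_eq_zero.mp hRzero
    exact this
  have := congrFun (congrFun hQeqK f) g
  rw [hQ, hK] at this
  simp only [Matrix.smul_apply, Matrix.sum_apply, Matrix.of_apply, smul_eq_mul] at this
  rw [eq_div_iff hsne] at this
  rw [← this]
  ring

lemma fin3_cases (v : Fin 3) : v = 0 ∨ v = 1 ∨ v = 2 := by omega
lemma fin4_cases {p : Fin 4} (h : p ≠ 0) : p = 1 ∨ p = 2 ∨ p = 3 := by omega

lemma pe_offdiag_zero {p : Fin 4} (hp : p = 0 ∨ p = 3) {x y : Bool} (h : x ≠ y) :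
    pauliEntry p x y = 0 := by
  rcases hp with h' | h' <;> subst h' <;> simp [pauliEntry, h]
lemma pe_diag_zero {p : Fin 4} (hp : p = 1 ∨ p = 2) (b : Bool) : pauliEntry p b b = 0 := by
  rcases hp with h' | h' <;> subst h' <;> simp [pauliEntry]
lemma pe_diag_sq {p : Fin 4} (hp : p = 0 ∨ p = 3) (b : Bool) :
    pauliEntry p b b * pauliEntry p b b = 1 := by
  rcases hp with h' | h' <;> subst h' <;> cases b <;> simp [pauliEntry]
lemma pe_three_flip (b : Bool) : pauliEntry 3 (!b) (!b) = - pauliEntry 3 b b := by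
  cases b <;> simp [pauliEntry]
lemma pe_zero_diag (b : Bool) : pauliEntry 0 b b = 1 := by simp [pauliEntry]

/-- The unnormalized post-measurement density matrix of qubit `j0` (the region A),
given the state vector φ and computational-basis outcome y on the region B
(`part j = 1`), after also measuring out nothing on C (`part j = 2`) — i.e. the
reduced state on A obtained by projecting B onto y and tracing out C. -/
noncomputable def postMeasA (n : ℕ) (part : Fin n → Fin 3) (j0 : Fin n)
    (φ : (Fin n → Bool) → ℂ) (y : {j : Fin n // part j = 1} → Bool) :
    Matrix Bool Bool ℂ :=
  Matrix.of fun a a' =>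
    ∑ f : Fin n → Bool, ∑ g : Fin n → Bool,
      if f j0 = a ∧ g j0 = a' ∧
          (∀ j : Fin n, ∀ h : part j = 1, f j = y ⟨j, h⟩ ∧ g j = y ⟨j, h⟩) ∧
          (∀ j : Fin n, part j = 2 → f j = g j)
      then φ f * (starRingEnd ℂ) (φ g) else 0

noncomputable def Ey (n : ℕ) (part : Fin n → Fin 3) (j0 : Fin n)
    (y : {j : Fin n // part j = 1} → Bool) : Finset (Fin n → Bool) :=
  Finset.univ.filter (fun h : Fin n → Bool =>
    h j0 = false ∧ ∀ (j : Fin n) (hj : part j = 1), h j = y ⟨j, hj⟩)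

lemma collapse (n : ℕ) (part : Fin n → Fin 3) (j0 : Fin n)
    (hj0 : part j0 = 0) (hA : ∀ j, part j = 0 → j = j0)
    (φ : (Fin n → Bool) → ℂ) (y : {j : Fin n // part j = 1} → Bool) (a a' : Bool) :
    postMeasA n part j0 φ y a a'
      = ∑ h ∈ Ey n part j0 y,
          φ (Function.update h j0 a) * (starRingEnd ℂ) (φ (Function.update h j0 a')) := by
  classical
  have hne : ∀ j, part j = 1 → j ≠ j0 := fun j hj h => by rw [h, hj0] at hj; exact absurd hj (by decide)
  have hne2 : ∀ j, part j = 2 → j ≠ j0 := fun j hj h => by rw [h, hj0] at hj; exact absurd hj (by decide)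
  simp only [postMeasA, Matrix.of_apply]
  have step1 : ∀ f : Fin n → Bool,
      (∑ g : Fin n → Bool,
        if f j0 = a ∧ g j0 = a' ∧
            (∀ j : Fin n, ∀ h : part j = 1, f j = y ⟨j, h⟩ ∧ g j = y ⟨j, h⟩) ∧
            (∀ j : Fin n, part j = 2 → f j = g j)
        then φ f * (starRingEnd ℂ) (φ g) else 0)
      = if f j0 = a ∧ ∀ (j : Fin n) (hj : part j = 1), f j = y ⟨j, hj⟩
        then φ f * (starRingEnd ℂ) (φ (Function.update f j0 a')) else 0 := by
    intro f
    by_cases hf : f j0 = a ∧ ∀ (j : Fin n) (hj : part j = 1), f j = y ⟨j, hj⟩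
    · rw [if_pos hf]
      rw [Finset.sum_eq_single (Function.update f j0 a')]
      · rw [if_pos]
        refine ⟨hf.1, Function.update_self _ _ _, fun j hj => ?_, fun j hj => ?_⟩
        · rw [Function.update_of_ne (hne j hj)]
          exact ⟨hf.2 j hj, hf.2 j hj⟩
        · rw [Function.update_of_ne (hne2 j hj)]
      · intro g _ hg
        rw [if_neg]
        rintro ⟨h1, h2, h3, h4⟩
        apply hg
        funext j
        by_cases hjj : j = j0
        · subst hjj; rw [Function.update_self, h2]
        · rw [Function.update_of_ne hjj]
          rcases fin3_cases (part j) with h | h | h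
          · exact absurd (hA j h) hjj
          · rw [(h3 j h).2, ← (h3 j h).1]
          · exact (h4 j h).symm
      · intro h; exact absurd (Finset.mem_univ _) h
    · rw [if_neg hf]
      refine Finset.sum_eq_zero fun g _ => ?_
      rw [if_neg]
      rintro ⟨h1, h2, h3, h4⟩
      exact hf ⟨h1, fun j hj => (h3 j hj).1⟩
  rw [Finset.sum_congr rfl (fun f _ => step1 f), ← Finset.sum_filter]
  refine Finset.sum_nbij' (fun f => Function.update f j0 false)
    (fun h => Function.update h j0 a) ?_ ?_ ?_ ?_ ?_
  · intro f hf
    rw [Finset.mem_filter] at hf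
    rw [Ey, Finset.mem_filter]
    refine ⟨Finset.mem_univ _, Function.update_self _ _ _, fun j hj => ?_⟩
    simp only [Function.update_of_ne (hne j hj)]
    exact hf.2.2 j hj
  · intro h hh
    rw [Ey, Finset.mem_filter] at hh
    rw [Finset.mem_filter]
    refine ⟨Finset.mem_univ _, Function.update_self _ _ _, fun j hj => ?_⟩
    simp only [Function.update_of_ne (hne j hj)]
    exact hh.2.2 j hj
  · intro f hf
    rw [Finset.mem_filter] at hf
    show Function.update (Function.update f j0 false) j0 a = f
    rw [Function.update_idem, ← hf.2.1, Function.update_eq_self]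
  · intro h hh
    rw [Ey, Finset.mem_filter] at hh
    show Function.update (Function.update h j0 a) j0 false = h
    rw [Function.update_idem, ← hh.2.1, Function.update_eq_self]
  · intro f hf
    rw [Finset.mem_filter] at hf
    show _ = φ (Function.update (Function.update f j0 false) j0 a)
        * (starRingEnd ℂ) (φ (Function.update (Function.update f j0 false) j0 a'))
    rw [Function.update_idem, Function.update_idem, ← hf.2.1, Function.update_eq_self]

lemma column_relation (n : ℕ) (part : Fin n → Fin 3) (j0 : Fin n)
    (hj0 : part j0 = 0) (hA : ∀ j, part j = 0 → j = j0)
    (φ : (Fin n → Bool) → ℂ) (p : Fin n → Fin 4) (ε : ℂ)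
    (hB : ∀ j, part j = 1 → (p j = 0 ∨ p j = 3)) (hC : ∀ j, part j = 2 → p j = 0)
    (hfix : (ε • pauliMat n p).mulVec φ = φ) (h : Fin n → Bool) (a : Bool) :
    φ (Function.update h j0 a)
      = ε * (∏ j ∈ Finset.univ.erase j0, pauliEntry (p j) (h j) (h j))
          * (pauliEntry (p j0) a false * φ (Function.update h j0 false)
             + pauliEntry (p j0) a true * φ (Function.update h j0 true)) := by
  classical
  have hdiag : ∀ j, j ≠ j0 → (p j = 0 ∨ p j = 3) := by
    intro j hj
    rcases fin3_cases (part j) with h' | h' | h'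
    · exact absurd (hA j h') hj
    · exact hB j h'
    · exact Or.inl (hC j h')
  set u : Bool → (Fin n → Bool) := fun b => Function.update h j0 b with hu
  have hval := congrFun hfix (u a)
  rw [Matrix.smul_mulVec] at hval
  have hexp : ((pauliMat n p).mulVec φ) (u a)
      = ∑ g : Fin n → Bool, (∏ j, pauliEntry (p j) (u a j) (g j)) * φ g := by
    simp [Matrix.mulVec, dotProduct, pauliMat]
  -- restrict the sum to the two updates
  have hT : ({u false, u true} : Finset (Fin n → Bool)) ⊆ Finset.univ := Finset.subset_univ _
  have hvanish : ∀ g ∈ Finset.univ, g ∉ ({u false, u true} : Finset (Fin n → Bool)) →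
      (∏ j, pauliEntry (p j) (u a j) (g j)) * φ g = 0 := by
    intro g _ hg
    simp only [Finset.mem_insert, Finset.mem_singleton] at hg
    push_neg at hg
    have : ∃ j, j ≠ j0 ∧ g j ≠ h j := by
      by_contra hcon
      push_neg at hcon
      have : g = u (g j0) := by
        funext j
        by_cases hjj : j = j0
        · subst hjj; rw [hu]; simp
        · rw [hu]; simp only [Function.update_of_ne hjj]; exact hcon j hjj
      cases hb : g j0
      · exact hg.1 (by rw [this, hb])
      · exact hg.2 (by rw [this, hb])
    obtain ⟨j, hjj, hgj⟩ := this
    have : pauliEntry (p j) (u a j) (g j) = 0 := by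
      have : u a j = h j := by rw [hu]; simp only [Function.update_of_ne hjj]
      rw [this]
      exact pe_offdiag_zero (hdiag j hjj) (Ne.symm hgj)
    rw [Finset.prod_eq_zero (Finset.mem_univ j) this, zero_mul]
  have hsum : ∑ g : Fin n → Bool, (∏ j, pauliEntry (p j) (u a j) (g j)) * φ g
      = ∑ g ∈ ({u false, u true} : Finset (Fin n → Bool)),
          (∏ j, pauliEntry (p j) (u a j) (g j)) * φ g :=
    (Finset.sum_subset hT hvanish).symm
  have hne : u false ≠ u true := by
    intro hcon
    have := congrFun hcon j0
    rw [hu] at this; simp at this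
  have hterm : ∀ b : Bool, (∏ j, pauliEntry (p j) (u a j) (u b j))
      = pauliEntry (p j0) a b * ∏ j ∈ Finset.univ.erase j0, pauliEntry (p j) (h j) (h j) := by
    intro b
    rw [← Finset.mul_prod_erase Finset.univ _ (Finset.mem_univ j0)]
    congr 1
    · rw [hu]; simp
    · refine Finset.prod_congr rfl fun j hj => ?_
      have hjj : j ≠ j0 := (Finset.mem_erase.mp hj).1
      rw [hu]; simp only [Function.update_of_ne hjj]
  simp only [Pi.smul_apply, smul_eq_mul] at hval
  rw [hexp, hsum, Finset.sum_pair hne, hterm false, hterm true] at hval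
  rw [show φ (Function.update h j0 a) = φ (u a) from rfl, ← hval]
  show ε * _ = _
  rw [show φ (Function.update h j0 false) = φ (u false) from rfl,
    show φ (Function.update h j0 true) = φ (u true) from rfl]
  ring

lemma sq_one_cases {w : ℂ} (h : w * w = 1) : w = 1 ∨ w = -1 := by
  have hz : (w - 1) * (w + 1) = 0 := by linear_combination h
  rcases mul_eq_zero.mp hz with h1 | h1
  · left; linear_combination h1
  · right; linear_combination h1

lemma purity_of_special (n : ℕ) (part : Fin n → Fin 3) (j0 : Fin n)
    (hj0 : part j0 = 0) (hA : ∀ j, part j = 0 → j = j0)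
    (φ : (Fin n → Bool) → ℂ) (p : Fin n → Fin 4) (ε : ℂ) (hε : ε = 1 ∨ ε = -1)
    (hp0 : p j0 ≠ 0)
    (hB : ∀ j, part j = 1 → (p j = 0 ∨ p j = 3)) (hC : ∀ j, part j = 2 → p j = 0)
    (hfix : (ε • pauliMat n p).mulVec φ = φ) (y : {j : Fin n // part j = 1} → Bool) :
    (postMeasA n part j0 φ y * postMeasA n part j0 φ y).trace
      = ((postMeasA n part j0 φ y).trace) ^ 2 := by
  classical
  set ρ := postMeasA n part j0 φ y with hρ
  have hcol := collapse n part j0 hj0 hA φ y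
  -- dichotomy
  have hdich : (∃ c : ℂ, ∀ h ∈ Ey n part j0 y,
        φ (Function.update h j0 true) = c * φ (Function.update h j0 false))
      ∨ (∃ c : ℂ, ∀ h ∈ Ey n part j0 y,
        φ (Function.update h j0 false) = c * φ (Function.update h j0 true)) := by
    rcases Finset.eq_empty_or_nonempty (Ey n part j0 y) with hE | ⟨h0, hh0⟩
    · left; exact ⟨0, fun h hh => by rw [hE] at hh; exact absurd hh (Finset.notMem_empty _)⟩
    set w : ℂ := ∏ j ∈ Finset.univ.erase j0, pauliEntry (p j) (h0 j) (h0 j) with hw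
    have hwconst : ∀ h ∈ Ey n part j0 y,
        (∏ j ∈ Finset.univ.erase j0, pauliEntry (p j) (h j) (h j)) = w := by
      intro h hh
      rw [Ey, Finset.mem_filter] at hh hh0
      refine Finset.prod_congr rfl fun j hj => ?_
      have hjj : j ≠ j0 := (Finset.mem_erase.mp hj).1
      rcases fin3_cases (part j) with h' | h' | h'
      · exact absurd (hA j h') hjj
      · rw [hh.2.2 j h', hh0.2.2 j h']
      · rw [hC j h', pe_zero_diag, pe_zero_diag]
    have hw1 : w = 1 ∨ w = -1 := by
      apply sq_one_cases
      rw [hw, ← Finset.prod_mul_distrib]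
      refine Finset.prod_eq_one fun j hj => ?_
      have hjj : j ≠ j0 := (Finset.mem_erase.mp hj).1
      rcases fin3_cases (part j) with h' | h' | h'
      · exact absurd (hA j h') hjj
      · exact pe_diag_sq (hB j h') _
      · exact pe_diag_sq (Or.inl (hC j h')) _
    set η : ℂ := ε * w with hη
    have hη1 : η = 1 ∨ η = -1 := by
      rcases hε with h1 | h1 <;> rcases hw1 with h2 | h2 <;>
        rw [hη, h1, h2] <;> norm_num
    have hrel : ∀ h ∈ Ey n part j0 y, ∀ a : Bool,
        φ (Function.update h j0 a)
          = η * (pauliEntry (p j0) a false * φ (Function.update h j0 false)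
              + pauliEntry (p j0) a true * φ (Function.update h j0 true)) := by
      intro h hh a
      rw [hη, ← hwconst h hh]
      exact column_relation n part j0 hj0 hA φ p ε hB hC hfix h a
    rcases fin4_cases hp0 with h1 | h1 | h1
    · left
      exact ⟨η, fun h hh => by
        have := hrel h hh true
        rw [h1] at this
        simpa [pauliEntry] using this⟩
    · left
      refine ⟨η * Complex.I, fun h hh => ?_⟩
      have hthis := hrel h hh true
      rw [h1] at hthis
      simp [pauliEntry] at hthis
      rw [hthis]; ring
    · rcases hη1 with h2 | h2
      · left
        refine ⟨0, fun h hh => ?_⟩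
        have hthis := hrel h hh true
        rw [h1, h2] at hthis
        simp [pauliEntry] at hthis
        have h3 : (2:ℂ) * φ (Function.update h j0 true) = 0 := by linear_combination hthis
        have h4 := mul_eq_zero.mp h3
        simp only [OfNat.ofNat_ne_zero, false_or] at h4
        rw [h4, zero_mul]
      · right
        refine ⟨0, fun h hh => ?_⟩
        have hthis := hrel h hh false
        rw [h1, h2] at hthis
        simp [pauliEntry] at hthis
        have h3 : (2:ℂ) * φ (Function.update h j0 false) = 0 := by linear_combination hthis
        have h4 := mul_eq_zero.mp h3
        simp only [OfNat.ofNat_ne_zero, false_or] at h4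
        rw [h4, zero_mul]
  -- conclude purity
  rcases hdich with ⟨c, hc⟩ | ⟨c, hc⟩
  · have e1 : ∀ a', ρ true a' = c * ρ false a' := by
      intro a'
      rw [hρ, hcol true a', hcol false a', Finset.mul_sum]
      refine Finset.sum_congr rfl fun h hh => ?_
      rw [hc h hh]; ring
    have tt := e1 true; have tf := e1 false
    simp only [Matrix.trace, Matrix.diag, Matrix.mul_apply, Fintype.sum_bool]
    rw [tt, tf]; ring
  · have e1 : ∀ a', ρ false a' = c * ρ true a' := by
      intro a'
      rw [hρ, hcol true a', hcol false a', Finset.mul_sum]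
      refine Finset.sum_congr rfl fun h hh => ?_
      rw [hc h hh]; ring
    have tt := e1 true; have tf := e1 false
    simp only [Matrix.trace, Matrix.diag, Matrix.mul_apply, Fintype.sum_bool]
    rw [tt, tf]; ring

lemma forward_scalar (n : ℕ) (part : Fin n → Fin 3) (j0 : Fin n)
    (hj0 : part j0 = 0) (hA : ∀ j, part j = 0 → j = j0)
    (φ : (Fin n → Bool) → ℂ) (hφ : φ ≠ 0)
    (hcard : ((Set.toFinite (stabSet n φ)).toFinset).card = 2 ^ n)
    (hno : ∀ p ∈ stabSet n φ, p j0 ≠ 0 →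
      ¬((∀ j, part j = 1 → (p j = 0 ∨ p j = 3)) ∧ (∀ j, part j = 2 → p j = 0)))
    (y : {j : Fin n // part j = 1} → Bool) :
    ∃ T : ℂ, ∀ a a', postMeasA n part j0 φ y a a' = if a = a' then T else 0 := by
  classical
  set Sf := (Set.toFinite (stabSet n φ)).toFinset with hSf
  have hmem : ∀ p, p ∈ Sf ↔ p ∈ stabSet n φ := fun p => Set.Finite.mem_toFinset _
  set s : ℂ := ∑ h, φ h * (starRingEnd ℂ) (φ h) with hs
  set Inner : (Fin n → Fin 4) → ℂ :=
    fun p => ∑ h ∈ Ey n part j0 y, ∏ j ∈ Finset.univ.erase j0, pauliEntry (p j) (h j) (h j)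
    with hInner
  have hne1 : ∀ j, part j = 1 → j ≠ j0 := fun j hj h => by
    rw [h, hj0] at hj; exact absurd hj (by decide)
  have hne2 : ∀ j, part j = 2 → j ≠ j0 := fun j hj h => by
    rw [h, hj0] at hj; exact absurd hj (by decide)
  -- key vanishing
  have key : ∀ p ∈ Sf, p j0 ≠ 0 → Inner p = 0 := by
    intro p hp hp0
    have hviol := hno p ((hmem p).mp hp) hp0
    rw [not_and_or] at hviol
    rcases hviol with hv | hv
    · obtain ⟨j1, hj1'⟩ := not_forall.mp hv
      rw [Classical.not_imp] at hj1'
      obtain ⟨hj1, hpj1⟩ := hj1'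
      push_neg at hpj1
      have hd : p j1 = 1 ∨ p j1 = 2 := by omega
      refine Finset.sum_eq_zero fun h _ => ?_
      refine Finset.prod_eq_zero (Finset.mem_erase.mpr ⟨hne1 j1 hj1, Finset.mem_univ _⟩) ?_
      exact pe_diag_zero hd _
    · obtain ⟨j1, hj1'⟩ := not_forall.mp hv
      rw [Classical.not_imp] at hj1'
      obtain ⟨hj1, hpj1⟩ := hj1'
      by_cases hd : p j1 = 1 ∨ p j1 = 2
      · refine Finset.sum_eq_zero fun h _ => ?_
        refine Finset.prod_eq_zero (Finset.mem_erase.mpr ⟨hne2 j1 hj1, Finset.mem_univ _⟩) ?_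
        exact pe_diag_zero hd _
      · have h3 : p j1 = 3 := by omega
        rw [hInner]
        refine Finset.sum_involution (fun h _ => Function.update h j1 (! h j1)) ?_ ?_ ?_ ?_
        · intro h hh
          have hmem1 : j1 ∈ Finset.univ.erase j0 :=
            Finset.mem_erase.mpr ⟨hne2 j1 hj1, Finset.mem_univ _⟩
          rw [← Finset.mul_prod_erase _ _ hmem1, ← Finset.mul_prod_erase _ _ hmem1]
          have hrest : ∏ j ∈ (Finset.univ.erase j0).erase j1,
              pauliEntry (p j) (Function.update h j1 (! h j1) j) (Function.update h j1 (! h j1) j)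
              = ∏ j ∈ (Finset.univ.erase j0).erase j1, pauliEntry (p j) (h j) (h j) := by
            refine Finset.prod_congr rfl fun j hj => ?_
            have : j ≠ j1 := (Finset.mem_erase.mp hj).1
            simp only [Function.update_of_ne this]
          rw [hrest]
          have hflip : pauliEntry (p j1) (Function.update h j1 (! h j1) j1)
              (Function.update h j1 (! h j1) j1) = - pauliEntry (p j1) (h j1) (h j1) := by
            rw [Function.update_self, h3]
            exact pe_three_flip _
          rw [hflip]
          ring
        · intro h hh hne
          intro hcon
          have h5 : Function.update h j1 (! h j1) j1 = h j1 := congrFun hcon j1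
          rw [Function.update_self] at h5
          exact (Bool.not_ne_self (h j1)) h5
        · intro h hh
          simp only [Ey, Finset.mem_filter] at hh ⊢
          have hj0j1 : j0 ≠ j1 := fun hcon => by
            rw [← hcon, hj0] at hj1; exact absurd hj1 (by decide)
          refine ⟨Finset.mem_univ _, ?_, fun j hj => ?_⟩
          · rw [Function.update_of_ne hj0j1]
            exact hh.2.1
          · have hjne : j ≠ j1 := fun hcon => by
              rw [hcon, hj1] at hj; exact absurd hj (by decide)
            rw [Function.update_of_ne hjne]
            exact hh.2.2 j hj
        · intro h hh
          funext j
          by_cases hjj : j = j1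
          · subst hjj
            simp [Function.update_self]
          · simp [Function.update_of_ne hjj]
  -- expand ρ
  have hcol := collapse n part j0 hj0 hA φ y
  have hsplit : ∀ (h : Fin n → Bool) (p : Fin n → Fin 4) (a a' : Bool),
      pauliMat n p (Function.update h j0 a) (Function.update h j0 a')
        = pauliEntry (p j0) a a' * ∏ j ∈ Finset.univ.erase j0, pauliEntry (p j) (h j) (h j) := by
    intro h p a a'
    show (∏ j, pauliEntry (p j) (Function.update h j0 a j) (Function.update h j0 a' j)) = _
    rw [← Finset.mul_prod_erase Finset.univ _ (Finset.mem_univ j0)]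
    congr 1
    · rw [Function.update_self, Function.update_self]
    · refine Finset.prod_congr rfl fun j hj => ?_
      have hjj : j ≠ j0 := (Finset.mem_erase.mp hj).1
      rw [Function.update_of_ne hjj, Function.update_of_ne hjj]
  refine ⟨s * ((2:ℂ)^n)⁻¹ * ∑ p ∈ Sf, (if p j0 = 0 then sgn n φ p * Inner p else 0), ?_⟩
  intro a a'
  rw [hcol a a']
  have hterm : ∀ h ∈ Ey n part j0 y,
      φ (Function.update h j0 a) * (starRingEnd ℂ) (φ (Function.update h j0 a'))
        = s * ((2:ℂ)^n)⁻¹ * ∑ p ∈ Sf, sgn n φ p *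
            (pauliEntry (p j0) a a' * ∏ j ∈ Finset.univ.erase j0, pauliEntry (p j) (h j) (h j)) := by
    intro h _
    rw [grand_formula hφ hcard]
    rw [mul_assoc, mul_assoc]
    congr 2
    refine Finset.sum_congr rfl fun p _ => ?_
    rw [hsplit h p a a']
  rw [Finset.sum_congr rfl hterm, ← Finset.mul_sum, Finset.sum_comm]
  have hswap : ∀ p ∈ Sf, (∑ h ∈ Ey n part j0 y, sgn n φ p *
      (pauliEntry (p j0) a a' * ∏ j ∈ Finset.univ.erase j0, pauliEntry (p j) (h j) (h j)))
      = if a = a' then (if p j0 = 0 then sgn n φ p * Inner p else 0) else 0 := by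
    intro p hp
    rw [← Finset.mul_sum, ← Finset.mul_sum,
      show (∑ h ∈ Ey n part j0 y, ∏ j ∈ Finset.univ.erase j0,
        pauliEntry (p j) (h j) (h j)) = Inner p from rfl]
    by_cases hp0 : p j0 = 0
    · by_cases haa : a = a'
      · subst haa
        rw [hp0, pe_zero_diag, if_pos rfl, if_pos rfl, one_mul]
      · rw [pe_offdiag_zero (Or.inl hp0) haa, if_neg haa, zero_mul, mul_zero]
    · rw [key p hp hp0, mul_zero, mul_zero]
      by_cases haa : a = a' <;> simp [haa, hp0]
  rw [Finset.sum_congr rfl hswap]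
  by_cases haa : a = a'
  · simp only [if_pos haa]
  · simp only [if_neg haa, Finset.sum_const_zero, mul_zero]

/-- Let φ be an n-qubit pure stabilizer state with stabilizer group G
(a group of 2^n signed Pauli strings), and let [n] = A ∪ B ∪ C be a tripartition with
A = {j0} a single qubit. Then the post-measurement reduced state on A is pure for every
computational-basis outcome on B if and only if G contains an element of the form
±P_A ⊗ Z(r)_B ⊗ I_C with P ∈ {X,Y,Z}. (Purity of the unnormalized 2×2 matrix ρ is
expressed as Tr(ρ²) = (Tr ρ)².) -/
theorem stmt_0 (n : ℕ) (part : Fin n → Fin 3) (j0 : Fin n)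
    (hj0 : part j0 = 0) (hA : ∀ j, part j = 0 → j = j0)
    (φ : (Fin n → Bool) → ℂ) (hφ : φ ≠ 0)
    (G : Set (Matrix (Fin n → Bool) (Fin n → Bool) ℂ))
    (hG : G = {g | ∃ ε ∈ ({1, -1} : Set ℂ), ∃ p : Fin n → Fin 4,
      g = ε • pauliMat n p ∧ g.mulVec φ = φ})
    (hstab : Set.ncard {p : Fin n → Fin 4 | ∃ ε ∈ ({1, -1} : Set ℂ),
      ((ε • pauliMat n p).mulVec φ = φ)} = 2 ^ n) :
    (∀ y : {j : Fin n // part j = 1} → Bool,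
        (postMeasA n part j0 φ y * postMeasA n part j0 φ y).trace =
          ((postMeasA n part j0 φ y).trace) ^ 2) ↔
      ∃ ε ∈ ({1, -1} : Set ℂ), ∃ p : Fin n → Fin 4,
        p j0 ≠ 0 ∧
        (∀ j, part j = 1 → (p j = 0 ∨ p j = 3)) ∧
        (∀ j, part j = 2 → p j = 0) ∧
        (ε • pauliMat n p) ∈ G := by
  classical
  have hstab' : Set.ncard (stabSet n φ) = 2 ^ n := hstab
  have hcard : ((Set.toFinite (stabSet n φ)).toFinset).card = 2 ^ n := by
    rw [← Set.ncard_eq_toFinset_card _ (Set.toFinite _)]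
    exact hstab'
  constructor
  · intro hpur
    by_contra hR
    have hno : ∀ p ∈ stabSet n φ, p j0 ≠ 0 →
        ¬((∀ j, part j = 1 → (p j = 0 ∨ p j = 3)) ∧ (∀ j, part j = 2 → p j = 0)) := by
      rintro p hpS hp0 ⟨hB, hC⟩
      apply hR
      have hsg : sgn n φ p ∈ ({1, -1} : Set ℂ) := by
        rcases sgn_mem hφ hpS with h | h <;> simp [h]
      refine ⟨sgn n φ p, hsg, p, hp0, hB, hC, ?_⟩
      rw [hG]
      exact ⟨sgn n φ p, hsg, p, rfl, sgn_spec hpS⟩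
    obtain ⟨f0, hf0⟩ := Function.ne_iff.mp hφ
    set y0 : {j : Fin n // part j = 1} → Bool := fun j => f0 j.1 with hy0
    obtain ⟨T, hT⟩ := forward_scalar n part j0 hj0 hA φ hφ hcard hno y0
    have hp := hpur y0
    set ρ := postMeasA n part j0 φ y0 with hρ
    have e1 := hT true true
    have e2 := hT false false
    have e3 := hT true false
    have e4 := hT false true
    rw [if_pos rfl] at e1 e2
    rw [if_neg (by decide)] at e3
    rw [if_neg (by decide)] at e4
    have htr : ρ.trace = 2 * T := by
      simp only [Matrix.trace, Matrix.diag, Fintype.sum_bool, e1, e2]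
      ring
    have htr2 : (ρ * ρ).trace = 2 * T ^ 2 := by
      simp only [Matrix.trace, Matrix.diag, Matrix.mul_apply, Fintype.sum_bool, e1, e2, e3, e4]
      ring
    rw [htr2, htr] at hp
    have hT2 : T ^ 2 = 0 := by linear_combination (-(1:ℂ)/2) * hp
    have hT0 : T = 0 := by
      exact pow_eq_zero_iff two_ne_zero |>.mp hT2
    -- contradiction with positivity
    have hdiag := collapse n part j0 hj0 hA φ y0 (f0 j0) (f0 j0)
    rw [← hρ] at hdiag
    have hzent : ρ (f0 j0) (f0 j0) = 0 := by
      rw [hT, hT0]; split_ifs <;> rfl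
    rw [hzent] at hdiag
    have hmemE : Function.update f0 j0 false ∈ Ey n part j0 y0 := by
      simp only [Ey, Finset.mem_filter]
      refine ⟨Finset.mem_univ _, Function.update_self _ _ _, fun j hj => ?_⟩
      have hjj : j ≠ j0 := fun hcon => by rw [hcon, hj0] at hj; exact absurd hj (by decide)
      rw [Function.update_of_ne hjj]
    have hcast : (0:ℂ) = ((∑ h ∈ Ey n part j0 y0,
        Complex.normSq (φ (Function.update h j0 (f0 j0))) : ℝ) : ℂ) := by
      rw [hdiag]
      push_cast
      exact Finset.sum_congr rfl fun h _ => (Complex.mul_conj _)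
    have hreal : (∑ h ∈ Ey n part j0 y0,
        Complex.normSq (φ (Function.update h j0 (f0 j0))) : ℝ) = 0 := by
      exact_mod_cast hcast.symm
    have hzero := (Finset.sum_eq_zero_iff_of_nonneg
      (fun h _ => Complex.normSq_nonneg _)).mp hreal _ hmemE
    apply hf0
    have : Function.update (Function.update f0 j0 false) j0 (f0 j0) = f0 := by
      rw [Function.update_idem, Function.update_eq_self]
    rw [← this]
    exact Complex.normSq_eq_zero.mp hzero
  · rintro ⟨ε, hε, p, hp0, hB, hC, hmemG⟩
    rw [hG] at hmemG
    obtain ⟨ε', hε', p', hgeq, hfix⟩ := hmemG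
    intro y
    exact purity_of_special n part j0 hj0 hA φ p ε (by simpa using hε) hp0 hB hC hfix y
end

section
/- Let P₁', …, P_r' be independent uniformly random Pauli strings (each uniform over all Paulis on its respective set of qubits, including the identity), forming together a Pauli string on n qubits. For any subset Q ⊆ [n] and any fixed Pauli string K' on [n]∖Q, conditioning each P_i' to be non-identity can only decrease the probability that the restriction to Q is the identity: Pr[(P₁'⊗⋯⊗P_r')_Q = I | (P₁'⊗⋯⊗P_r')_{[n]∖Q} = K' and all P_i' ≠ I] ≤ Pr[(P₁'⊗⋯⊗P_r')_Q = I | (P₁'⊗⋯⊗P_r')_{[n]∖Q} = K'] = 4^{-|Q|}. -/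
/-!
The event that the restriction to `Q` is the identity and the restriction off `Q` is `K` is a
single Pauli string `P₀`, so the unconditioned probability is `1 / 4 ^ |Q|`. Conditioning on all
blocks being non-identity either kills `P₀` (probability `0`) or keeps it, and in the latter case
every block of `P₀` has a non-identity letter off `Q`, hence so does every string agreeing with
`K` off `Q`: the condition is then implied by the conditioning event and changes nothing.
-/

open scoped Classical
open Finset

section Counting

variable {α β : Type*} [Fintype α] [Fintype β] [DecidableEq α]

theorem card_filter_eqOn_compl (Q : Finset α) (K : α → β)
    [DecidablePred fun P : α → β => ∀ j ∉ Q, P j = K j] :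
    #(univ.filter fun P : α → β => ∀ j ∉ Q, P j = K j) = Fintype.card β ^ #Q := by
  have hpi : (univ.filter fun P : α → β => ∀ j ∉ Q, P j = K j) =
      Fintype.piFinset fun j => if j ∈ Q then univ else {K j} := by
    ext P
    simp only [mem_filter, mem_univ, true_and, Fintype.mem_piFinset]
    refine forall_congr' fun j => ?_
    by_cases hj : j ∈ Q <;> simp [hj]
  simp only [hpi, Fintype.card_piFinset, apply_ite card, card_univ, card_singleton]
  rw [prod_ite_mem_eq, prod_const]

theorem filter_eqOn_and_eqOn_compl (Q : Finset α) (z : β) (K : α → β)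
    [DecidablePred fun P : α → β => (∀ j ∈ Q, P j = z) ∧ ∀ j ∉ Q, P j = K j] :
    (univ.filter fun P : α → β => (∀ j ∈ Q, P j = z) ∧ ∀ j ∉ Q, P j = K j) =
      {Q.piecewise (fun _ => z) K} := by
  ext P
  simp only [mem_filter, mem_univ, true_and, mem_singleton, funext_iff]
  refine ⟨fun ⟨hQ, hK⟩ j => ?_, fun h => ⟨fun j hj => ?_, fun j hj => ?_⟩⟩
  · by_cases hj : j ∈ Q <;> simp [hj, hQ, hK]
  · simpa [hj] using h j
  · simpa [hj] using h j

end Counting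

theorem card_filter_and_div_le {α : Type*} [Fintype α] (E F C : α → Prop)
    [DecidablePred E] [DecidablePred F] [DecidablePred C]
    (hC : (∃ x, E x ∧ F x ∧ C x) → ∀ x, F x → C x) :
    (#(univ.filter fun x => E x ∧ F x ∧ C x) : ℝ) / #(univ.filter fun x => F x ∧ C x) ≤
      (#(univ.filter fun x => E x ∧ F x) : ℝ) / #(univ.filter F) := by
  by_cases hex : ∃ x, E x ∧ F x ∧ C x
  · have hFC := hC hex
    rw [filter_congr fun x _ => show (E x ∧ F x ∧ C x) ↔ (E x ∧ F x) by grind,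
      filter_congr fun x _ => show (F x ∧ C x) ↔ F x by grind]
  · rw [filter_false_of_mem fun x _ => not_exists.mp hex x]
    simp only [card_empty, Nat.cast_zero, zero_div]
    positivity

theorem stmt_6_general (n r : ℕ) (blocks : Fin r → Finset (Fin n))
    (Q : Finset (Fin n)) (K : Fin n → Fin 4) :
    (((univ.filter (fun P : Fin n → Fin 4 =>
          (∀ j ∈ Q, P j = 0) ∧ (∀ j ∉ Q, P j = K j) ∧
          (∀ i : Fin r, ∃ j ∈ blocks i, P j ≠ 0))).card : ℝ) /
        ((univ.filter (fun P : Fin n → Fin 4 =>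
          (∀ j ∉ Q, P j = K j) ∧ (∀ i : Fin r, ∃ j ∈ blocks i, P j ≠ 0))).card : ℝ) ≤
      ((univ.filter (fun P : Fin n → Fin 4 =>
          (∀ j ∈ Q, P j = 0) ∧ (∀ j ∉ Q, P j = K j))).card : ℝ) /
        ((univ.filter (fun P : Fin n → Fin 4 => ∀ j ∉ Q, P j = K j)).card : ℝ)) ∧
    ((univ.filter (fun P : Fin n → Fin 4 =>
          (∀ j ∈ Q, P j = 0) ∧ (∀ j ∉ Q, P j = K j))).card : ℝ) /
        ((univ.filter (fun P : Fin n → Fin 4 => ∀ j ∉ Q, P j = K j)).card : ℝ) =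
      (4 : ℝ) ^ (-(Q.card : ℤ)) := by
  refine ⟨card_filter_and_div_le (α := Fin n → Fin 4) (fun P => ∀ j ∈ Q, P j = 0)
    (fun P => ∀ j ∉ Q, P j = K j) (fun P => ∀ i : Fin r, ∃ j ∈ blocks i, P j ≠ 0) ?_, ?_⟩
  · rintro ⟨P₀, hQ, hK, hblocks⟩ P hP i
    obtain ⟨j, hj, hP₀j⟩ := hblocks i
    have hjQ : j ∉ Q := fun hjQ => hP₀j (hQ j hjQ)
    exact ⟨j, hj, by rwa [hP j hjQ, ← hK j hjQ]⟩
  · rw [filter_eqOn_and_eqOn_compl, card_filter_eqOn_compl]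
    simp [zpow_neg]

/-- for a uniformly random n-qubit Pauli string assembled from independent
uniform Pauli strings on blocks partitioning [n] (Pauli letters indexed by Fin 4 with 0 = I),
conditioning on the off-Q restriction being a fixed string K and each block being
non-identity can only decrease the probability that the restriction to Q is the identity,
which without the non-identity conditioning equals 4^{-|Q|}. -/
theorem stmt_6 (n r : ℕ) (blocks : Fin r → Finset (Fin n))
    (hpart : ∀ j : Fin n, ∃! i : Fin r, j ∈ blocks i)
    (Q : Finset (Fin n)) (K : Fin n → Fin 4) :
    (((univ.filter (fun P : Fin n → Fin 4 =>
          (∀ j ∈ Q, P j = 0) ∧ (∀ j ∉ Q, P j = K j) ∧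
          (∀ i : Fin r, ∃ j ∈ blocks i, P j ≠ 0))).card : ℝ) /
        ((univ.filter (fun P : Fin n → Fin 4 =>
          (∀ j ∉ Q, P j = K j) ∧ (∀ i : Fin r, ∃ j ∈ blocks i, P j ≠ 0))).card : ℝ) ≤
      ((univ.filter (fun P : Fin n → Fin 4 =>
          (∀ j ∈ Q, P j = 0) ∧ (∀ j ∉ Q, P j = K j))).card : ℝ) /
        ((univ.filter (fun P : Fin n → Fin 4 => ∀ j ∉ Q, P j = K j)).card : ℝ)) ∧
    ((univ.filter (fun P : Fin n → Fin 4 =>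
          (∀ j ∈ Q, P j = 0) ∧ (∀ j ∉ Q, P j = K j))).card : ℝ) /
        ((univ.filter (fun P : Fin n → Fin 4 => ∀ j ∉ Q, P j = K j)).card : ℝ) =
      (4 : ℝ) ^ (-(Q.card : ℤ)) :=
  stmt_6_general n r blocks Q K
end

section
/- Let C be a uniformly random t-qubit Clifford and let P_Q be a random Pauli on k < t qubits whose probability of being the identity is at most 4^{-k}; extend it by identity to t qubits. Then Pr[C† (P_Q ⊗ I^{⊗(t−k)}) C is Z-type] ≤ 4^{-k} + 2^{-t}. The key inequality is 4^{-k} + (1 − 4^{-k})·(2^t − 1)/(4^t − 1) ≤ 4^{-k} + 2^{-t}. -/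
open scoped Classical
open Finset

/-! Off the identity `μ` is uniform, with total mass `1 - μ I` spread over the `4^t - 1`
non-identity Paulis, of which `2^t - 1` are Z-type. Hence the Z-type mass is
`μ I + (1 - μ I) r` with `r = (2^t - 1)/(4^t - 1) = 1/(2^t + 1)`; this is increasing in `μ I`,
so it is at most `4^{-k} + (1 - 4^{-k}) r ≤ 4^{-k} + 2^{-t}`. -/

theorem card_filter_forall_eq_zero_or_eq_three (n : ℕ) :
    #(univ.filter fun W : Fin n → Fin 4 => ∀ j, W j = 0 ∨ W j = 3) = 2 ^ n := by
  have : (univ.filter fun W : Fin n → Fin 4 => ∀ j, W j = 0 ∨ W j = 3) =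
      Fintype.piFinset fun _ => {0, 3} := by
    ext W
    simp [Fintype.mem_piFinset]
  rw [this, Fintype.card_piFinset, prod_const, card_univ, Fintype.card_fin]
  rfl

theorem sum_eq_add_card_sub_one_mul {α : Type*} {s : Finset α} {a : α} (ha : a ∈ s)
    {f : α → ℝ} {c : ℝ} (hf : ∀ x ∈ s, x ≠ a → f x = c) :
    ∑ x ∈ s, f x = f a + (#s - 1 : ℝ) * c := by
  rw [← add_sum_erase s f ha,
    sum_congr rfl fun x hx => hf x (mem_of_mem_erase hx) (ne_of_mem_erase hx),
    sum_const, card_erase_of_mem ha, nsmul_eq_mul, Nat.cast_sub (card_pos.2 ⟨a, ha⟩),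
    Nat.cast_one]

theorem two_pow_sub_one_div_four_pow_sub_one {t : ℕ} (ht : t ≠ 0) :
    ((2 : ℝ) ^ t - 1) / (4 ^ t - 1) = (2 ^ t + 1)⁻¹ := by
  have h : (1 : ℝ) < 2 ^ t := one_lt_pow₀ one_lt_two ht
  have hfactor : (4 : ℝ) ^ t - 1 = (2 ^ t - 1) * (2 ^ t + 1) := by
    rw [show (4 : ℝ) = 2 ^ 2 by norm_num, ← pow_mul, mul_comm, pow_mul]
    ring
  rw [hfactor, div_mul_eq_div_div, div_self (by linarith), one_div]

theorem add_one_sub_mul_le_add_one_sub_mul {a b r : ℝ} (hab : a ≤ b) (hr : r ≤ 1) :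
    a + (1 - a) * r ≤ b + (1 - b) * r := by
  nlinarith

theorem add_one_sub_mul_le_add {a r ε : ℝ} (ha : 0 ≤ a) (hr : 0 ≤ r) (hrε : r ≤ ε) :
    a + (1 - a) * r ≤ a + ε := by
  nlinarith

theorem stmt_8_general (t k : ℕ) (hkt : k < t) (μ : (Fin t → Fin 4) → ℝ)
    (hI : μ (fun _ => 0) ≤ (4 : ℝ) ^ (-(k : ℤ)))
    (hunif : ∀ W : Fin t → Fin 4, W ≠ (fun _ => 0) →
      μ W = (1 - μ (fun _ => 0)) / ((4 : ℝ) ^ t - 1)) :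
    (∑ W ∈ univ.filter (fun W : Fin t → Fin 4 => ∀ j, W j = 0 ∨ W j = 3), μ W) ≤
        (4 : ℝ) ^ (-(k : ℤ)) + (2 : ℝ) ^ (-(t : ℤ)) ∧
      (4 : ℝ) ^ (-(k : ℤ)) +
          (1 - (4 : ℝ) ^ (-(k : ℤ))) * ((2 : ℝ) ^ t - 1) / ((4 : ℝ) ^ t - 1) ≤
        (4 : ℝ) ^ (-(k : ℤ)) + (2 : ℝ) ^ (-(t : ℤ)) := by
  set r := ((2 : ℝ) ^ t - 1) / ((4 : ℝ) ^ t - 1) with hr_def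
  have hr : r = (2 ^ t + 1)⁻¹ := two_pow_sub_one_div_four_pow_sub_one (by omega)
  have hr_nonneg : 0 ≤ r := by rw [hr]; positivity
  have hr_le : r ≤ (2 : ℝ) ^ (-(t : ℤ)) := by
    rw [hr, zpow_neg, zpow_natCast]
    gcongr
    linarith
  have hZ : ∑ W ∈ univ.filter (fun W : Fin t → Fin 4 => ∀ j, W j = 0 ∨ W j = 3), μ W =
      μ (fun _ => 0) + (1 - μ (fun _ => 0)) * r := by
    rw [sum_eq_add_card_sub_one_mul (by simp) fun W _ hW => hunif W hW,
      card_filter_forall_eq_zero_or_eq_three, hr_def]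
    push_cast
    ring
  have hr_le_one : r ≤ 1 := by
    rw [hr]
    exact inv_le_one_of_one_le₀ (le_add_of_nonneg_left (by positivity))
  have key := add_one_sub_mul_le_add (a := (4 : ℝ) ^ (-(k : ℤ))) (by positivity) hr_nonneg hr_le
  rw [hZ, mul_div_assoc]
  exact ⟨(add_one_sub_mul_le_add_one_sub_mul hI hr_le_one).trans key, key⟩

/-- Let μ be the distribution of C† (P_Q ⊗ I^{⊗(t−k)}) C for a uniformly
random t-qubit Clifford C and a random k-qubit Pauli P_Q (k < t) with
Pr[P_Q = I] ≤ 4^{-k}: μ assigns the identity probability at most 4^{-k} and is uniform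
on the 4^t − 1 non-identity t-qubit Paulis. Then Pr[Z-type] ≤ 4^{-k} + 2^{-t}; the key
inequality is 4^{-k} + (1 − 4^{-k})·(2^t−1)/(4^t−1) ≤ 4^{-k} + 2^{-t}. -/
theorem stmt_8 (t k : ℕ) (hk : 1 ≤ k) (hkt : k < t) (μ : (Fin t → Fin 4) → ℝ)
    (hnn : ∀ P, 0 ≤ μ P) (hsum : ∑ P, μ P = 1)
    (hI : μ (fun _ => 0) ≤ (4 : ℝ) ^ (-(k : ℤ)))
    (hunif : ∀ W : Fin t → Fin 4, W ≠ (fun _ => 0) →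
      μ W = (1 - μ (fun _ => 0)) / ((4 : ℝ) ^ t - 1)) :
    (∑ W ∈ univ.filter (fun W : Fin t → Fin 4 => ∀ j, W j = 0 ∨ W j = 3), μ W) ≤
        (4 : ℝ) ^ (-(k : ℤ)) + (2 : ℝ) ^ (-(t : ℤ)) ∧
      (4 : ℝ) ^ (-(k : ℤ)) +
          (1 - (4 : ℝ) ^ (-(k : ℤ))) * ((2 : ℝ) ^ t - 1) / ((4 : ℝ) ^ t - 1) ≤
        (4 : ℝ) ^ (-(k : ℤ)) + (2 : ℝ) ^ (-(t : ℤ)) :=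
  stmt_8_general t k hkt μ hI hunif
end
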